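/- Let 𝕊 ⊆ {1,…,n} be a random set with p_i = P(i ∈ 𝕊) > 0 and define y⁺ by y⁺_i = ŷ_i if i ∈ 𝕊 and y⁺_i = y_i otherwise. Let {v_i} be ESO parameters of the block operator with blocks C_i = S_i^{1/2} A_i T^{1/2} with respect to 𝕊, and Q = diag(p_1^{-1} I, …, p_n^{-1} I). Then for any x ∈ 𝕏 and any c > 0: 2 E_𝕊 ⟨Q A x, y⁺ − y⟩ ≥ − E_𝕊 { (1/c) ‖x‖²_{T^{-1}} + c (max_i v_i/p_i) ‖y⁺ − y‖²_{Q S^{-1}} }. -/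

import Mathlib

open scoped RealInnerProductSpace

/-- Probability that index `i` belongs to the random set, for a sampling given by the
probabilities `P R` of each set `R ⊆ {1,…,n}`. -/
noncomputable def probOf {n : ℕ} (P : Finset (Fin n) → ℝ) (i : Fin n) : ℝ :=
  ∑ R : Finset (Fin n), if i ∈ R then P R else 0

/-!
Write `x = T^{1/2} u` and `ŷ_i - y_i = S_i^{1/2} z_i`, so that `‖x‖²_{T⁻¹} = ‖u‖²` and
`‖ŷ_i - y_i‖²_{S_i⁻¹} = ‖z_i‖²`. With `C_i = S_i^{1/2} A_i T^{1/2}` and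
`w(𝕊) = Σ_{i ∈ 𝕊} C_i* (z_i / p_i)`, the inner product `⟨Q A x, y⁺ − y⟩` is `⟨u, w(𝕊)⟩`.
Young's inequality `-2⟨u, w⟩ ≤ ‖u‖²/c + c‖w‖²` reduces the claim to a bound on `E‖w(𝕊)‖²`,
and the ESO inequality applied to `(z_i / p_i)_i` bounds it by
`Σ_i (v_i / p_i) p_i p_i⁻¹ ‖z_i‖² ≤ (max_i v_i / p_i) E‖y⁺ − y‖²_{Q S⁻¹}`.
-/

theorem sqrt_apply_sqrt_apply_inv {R E : Type*} [Semiring R] [TopologicalSpace E]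
    [AddCommMonoid E] [Module R E] {B M Minv : E →L[R] E} (hBB : B.comp B = M)
    (hM : M.comp Minv = ContinuousLinearMap.id R E) (x : E) : B (B (Minv x)) = x := by
  rw [← ContinuousLinearMap.comp_apply, hBB, ← ContinuousLinearMap.comp_apply, hM,
    ContinuousLinearMap.id_apply]

theorem inner_inv_apply_self_eq_norm_sq {E : Type*} [NormedAddCommGroup E]
    [InnerProductSpace ℝ E] [CompleteSpace E] {B M Minv : E →L[ℝ] E} (hB : IsSelfAdjoint B)
    (hBB : B.comp B = M) (hM : M.comp Minv = ContinuousLinearMap.id ℝ E) (x : E) :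
    ⟪Minv x, x⟫ = ‖B (Minv x)‖ ^ 2 := by
  calc ⟪Minv x, x⟫ = ⟪Minv x, B (B (Minv x))⟫ := by rw [sqrt_apply_sqrt_apply_inv hBB hM]
    _ = ‖B (Minv x)‖ ^ 2 := by
      rw [← real_inner_self_eq_norm_sq]; exact (hB.isSymmetric _ _).symm

theorem inner_apply_sqrt_eq_inner_adjoint {E F : Type*} [NormedAddCommGroup E]
    [InnerProductSpace ℝ E] [CompleteSpace E] [NormedAddCommGroup F] [InnerProductSpace ℝ F]
    [CompleteSpace F] (A : E →L[ℝ] F) (C : E →L[ℝ] E) {B : F →L[ℝ] F} (hB : IsSelfAdjoint B)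
    (u : E) (z : F) :
    ⟪A (C u), B z⟫ = ⟪u, ContinuousLinearMap.adjoint (B.comp (A.comp C)) z⟫ := by
  rw [ContinuousLinearMap.adjoint_inner_right, ContinuousLinearMap.comp_apply,
    ContinuousLinearMap.comp_apply]
  exact (hB.isSymmetric _ _).symm

theorem neg_le_two_mul_inner {E : Type*} [NormedAddCommGroup E] [InnerProductSpace ℝ E]
    (u w : E) {c : ℝ} (hc : 0 < c) :
    -((1 / c) * ‖u‖ ^ 2 + c * ‖w‖ ^ 2) ≤ 2 * ⟪u, w⟫ := by
  have h : ‖u + c • w‖ ^ 2 = ‖u‖ ^ 2 + 2 * c * ⟪u, w⟫ + c ^ 2 * ‖w‖ ^ 2 := by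
    rw [norm_add_sq_real, real_inner_smul_right, norm_smul, Real.norm_of_nonneg hc.le]
    ring
  have h' : (1 / c) * ‖u + c • w‖ ^ 2 = (1 / c) * ‖u‖ ^ 2 + 2 * ⟪u, w⟫ + c * ‖w‖ ^ 2 := by
    rw [h]; field_simp
  have key : 0 ≤ (1 / c) * ‖u + c • w‖ ^ 2 := by positivity
  linarith

section Expectation

variable {Ω : Type*} [Fintype Ω] {P : Ω → ℝ}

theorem sum_mul_const_add (hP1 : ∑ R, P R = 1) (a : ℝ) (b : Ω → ℝ) :
    ∑ R, P R * (a + b R) = a + ∑ R, P R * b R := by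
  simp only [mul_add, Finset.sum_add_distrib, ← Finset.sum_mul, hP1, one_mul]

theorem neg_le_two_mul_expect_inner {E : Type*} [NormedAddCommGroup E] [InnerProductSpace ℝ E]
    (hP0 : ∀ R, 0 ≤ P R) (hP1 : ∑ R, P R = 1) (u : E) (w : Ω → E) {c : ℝ} (hc : 0 < c) :
    -((1 / c) * ‖u‖ ^ 2 + c * ∑ R, P R * ‖w R‖ ^ 2) ≤ 2 * ∑ R, P R * ⟪u, w R⟫ := by
  calc -((1 / c) * ‖u‖ ^ 2 + c * ∑ R, P R * ‖w R‖ ^ 2)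
      = ∑ R, P R * -((1 / c) * ‖u‖ ^ 2 + c * ‖w R‖ ^ 2) := by
        simp only [mul_neg, Finset.sum_neg_distrib, sum_mul_const_add hP1, Finset.mul_sum,
          mul_left_comm c]
    _ ≤ ∑ R, P R * (2 * ⟪u, w R⟫) :=
        Finset.sum_le_sum fun R _ =>
          mul_le_mul_of_nonneg_left (neg_le_two_mul_inner u (w R) hc) (hP0 R)
    _ = 2 * ∑ R, P R * ⟪u, w R⟫ := by simp only [Finset.mul_sum, mul_left_comm]

end Expectation

theorem sum_mul_sum_mem_eq_sum_probOf_mul {n : ℕ} (P : Finset (Fin n) → ℝ) (g : Fin n → ℝ) :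
    ∑ R : Finset (Fin n), P R * ∑ i ∈ R, g i = ∑ i, probOf P i * g i := by
  calc ∑ R : Finset (Fin n), P R * ∑ i ∈ R, g i
      = ∑ R : Finset (Fin n), ∑ i, (if i ∈ R then P R else 0) * g i := by
        refine Finset.sum_congr rfl fun R _ => ?_
        rw [← Finset.sum_ite_mem_eq R, Finset.mul_sum]
        exact Finset.sum_congr rfl fun i _ => by split_ifs <;> simp
    _ = ∑ i, probOf P i * g i := by
        rw [Finset.sum_comm]
        simp only [probOf, Finset.sum_mul]

theorem sum_ite_mem_sub {ι : Type*} [Fintype ι] [DecidableEq ι] {Y : ι → Type*}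
    [∀ i, AddGroup (Y i)] (R : Finset ι) (yhat y : ∀ i, Y i) (F : ∀ i, Y i → ℝ)
    (hF : ∀ i, F i 0 = 0) :
    ∑ i, F i ((if i ∈ R then yhat i else y i) - y i) = ∑ i ∈ R, F i (yhat i - y i) := by
  rw [← Finset.sum_ite_mem_eq R]
  refine Finset.sum_congr rfl fun i _ => ?_
  split_ifs <;> simp [hF]

theorem sum_mul_mul_norm_inv_smul_sq_le {ι : Type*} [Fintype ι] {Y : ι → Type*}
    [∀ i, NormedAddCommGroup (Y i)] [∀ i, NormedSpace ℝ (Y i)] (p v : ι → ℝ) {γ : ℝ}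
    (hγ : ∀ i, v i / p i ≤ γ) (z : ∀ i, Y i) :
    ∑ i, p i * v i * ‖(p i)⁻¹ • z i‖ ^ 2 ≤ γ * ∑ i, p i * ((p i)⁻¹ * ‖z i‖ ^ 2) := by
  rw [Finset.mul_sum]
  refine Finset.sum_le_sum fun i _ => ?_
  have hpp : 0 ≤ p i * (p i)⁻¹ := by
    rcases eq_or_ne (p i) 0 with h | h <;> simp [h]
  calc p i * v i * ‖(p i)⁻¹ • z i‖ ^ 2 = v i / p i * (p i * (p i)⁻¹ * ‖z i‖ ^ 2) := by
        rw [norm_smul, mul_pow, Real.norm_eq_abs, sq_abs]; ring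
    _ ≤ γ * (p i * (p i)⁻¹ * ‖z i‖ ^ 2) := by gcongr; exact hγ i
    _ = γ * (p i * ((p i)⁻¹ * ‖z i‖ ^ 2)) := by ring

theorem eso_inner_product_estimate {n : ℕ} (hn : 0 < n)
    (X : Type*) [NormedAddCommGroup X] [InnerProductSpace ℝ X] [CompleteSpace X]
    (Y : Fin n → Type*) [∀ i, NormedAddCommGroup (Y i)] [∀ i, InnerProductSpace ℝ (Y i)]
    [∀ i, CompleteSpace (Y i)]
    (A : ∀ i, X →L[ℝ] Y i)
    (T Tsqrt Tinv : X →L[ℝ] X) (S Ssqrt Sinv : ∀ i, Y i →L[ℝ] Y i)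
    -- step size operators: self-adjoint, positive definite, with square roots and inverses
    (hTsqrt : IsSelfAdjoint Tsqrt) (hTsq : Tsqrt.comp Tsqrt = T)
    (hTinv : Tinv.comp T = ContinuousLinearMap.id ℝ X ∧
      T.comp Tinv = ContinuousLinearMap.id ℝ X)
    (hSsqrt : ∀ i, IsSelfAdjoint (Ssqrt i)) (hSsq : ∀ i, (Ssqrt i).comp (Ssqrt i) = S i)
    (hSinv : ∀ i, (Sinv i).comp (S i) = ContinuousLinearMap.id ℝ (Y i) ∧
      (S i).comp (Sinv i) = ContinuousLinearMap.id ℝ (Y i))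
    -- the sampling
    (P : Finset (Fin n) → ℝ) (hP0 : ∀ R, 0 ≤ P R) (hP1 : ∑ R : Finset (Fin n), P R = 1)
    -- ESO parameters of S^{1/2} A T^{1/2}
    (v : Fin n → ℝ)
    (hESO : ∀ z : ∀ i, Y i,
      ∑ R : Finset (Fin n), P R *
        ‖∑ i ∈ R, (ContinuousLinearMap.adjoint ((Ssqrt i).comp ((A i).comp Tsqrt))) (z i)‖ ^ 2
      ≤ ∑ i, probOf P i * v i * ‖z i‖ ^ 2)
    (yhat y : ∀ i, Y i) :
    let yplus : Finset (Fin n) → ∀ i, Y i := fun R i => if i ∈ R then yhat i else y i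
    let γsq : ℝ := Finset.univ.sup' (Finset.univ_nonempty_iff.mpr ⟨⟨0, hn⟩⟩)
      (fun i => v i / probOf P i)
    ∀ (x : X) (c : ℝ), 0 < c →
      - (∑ R : Finset (Fin n), P R * ((1 / c) * ⟪Tinv x, x⟫ +
          c * γsq * ∑ i, (probOf P i)⁻¹ * ⟪Sinv i (yplus R i - y i), yplus R i - y i⟫))
      ≤ 2 * ∑ R : Finset (Fin n), P R * ∑ i, (probOf P i)⁻¹ * ⟪A i x, yplus R i - y i⟫ := by
  intro yplus γsq x c hc
  set p := probOf P
  set u := Tsqrt (Tinv x)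
  set z : ∀ i, Y i := fun i => Ssqrt i (Sinv i (yhat i - y i))
  set w : Finset (Fin n) → X := fun R =>
    ∑ i ∈ R, ContinuousLinearMap.adjoint ((Ssqrt i).comp ((A i).comp Tsqrt)) ((p i)⁻¹ • z i)
  have hx : Tsqrt u = x := sqrt_apply_sqrt_apply_inv hTsq hTinv.2 x
  have hz : ∀ i, Ssqrt i (z i) = yhat i - y i := fun i =>
    sqrt_apply_sqrt_apply_inv (hSsq i) (hSinv i).2 _
  have hinner : ∀ R, ∑ i, (p i)⁻¹ * ⟪A i x, yplus R i - y i⟫ = ⟪u, w R⟫ := by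
    intro R
    rw [sum_ite_mem_sub R yhat y (fun i t => (p i)⁻¹ * ⟪A i x, t⟫) (by simp), inner_sum]
    refine Finset.sum_congr rfl fun i _ => ?_
    rw [map_smul, real_inner_smul_right, ← inner_apply_sqrt_eq_inner_adjoint _ _ (hSsqrt i),
      hx, hz]
  have hdist : ∑ R, P R * ∑ i, (p i)⁻¹ * ⟪Sinv i (yplus R i - y i), yplus R i - y i⟫
      = ∑ i, p i * ((p i)⁻¹ * ‖z i‖ ^ 2) := by
    have hR : ∀ R, ∑ i, (p i)⁻¹ * ⟪Sinv i (yplus R i - y i), yplus R i - y i⟫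
        = ∑ i ∈ R, (p i)⁻¹ * ‖z i‖ ^ 2 := fun R => by
      rw [sum_ite_mem_sub R yhat y (fun i t => (p i)⁻¹ * ⟪Sinv i t, t⟫) (by simp)]
      simp only [inner_inv_apply_self_eq_norm_sq (hSsqrt _) (hSsq _) (hSinv _).2, z]
    simp only [hR, sum_mul_sum_mem_eq_sum_probOf_mul, p]
  have hw : ∑ R, P R * ‖w R‖ ^ 2 ≤ γsq * ∑ i, p i * ((p i)⁻¹ * ‖z i‖ ^ 2) :=
    (hESO fun i => (p i)⁻¹ • z i).trans (sum_mul_mul_norm_inv_smul_sq_le p v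
      (fun i => Finset.le_sup' (fun j => v j / p j) (Finset.mem_univ i)) z)
  calc _ = -((1 / c) * ‖u‖ ^ 2 + c * (γsq * ∑ i, p i * ((p i)⁻¹ * ‖z i‖ ^ 2))) := by
        rw [sum_mul_const_add hP1, inner_inv_apply_self_eq_norm_sq hTsqrt hTsq hTinv.2, ← hdist,
          Finset.mul_sum, Finset.mul_sum]
        congr 2
        exact Finset.sum_congr rfl fun _ _ => by ring
    _ ≤ -((1 / c) * ‖u‖ ^ 2 + c * ∑ R, P R * ‖w R‖ ^ 2) := by gcongr
    _ ≤ 2 * ∑ R, P R * ⟪u, w R⟫ := neg_le_two_mul_expect_inner hP0 hP1 u w hc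
    _ = _ := by simp only [hinner]
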